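/- Let X be a real normed vector space of dimension 2 and let n ≥ 3 be odd. Then the following are equivalent: (1) for every choice of n points x_1,…,x_n in X, the Fermat–Torricelli set ft(x_1,…,x_n) is a single point; (2) for every family of continuous linear functionals φ_1,…,φ_n on X with ‖φ_i‖ = 1 for all i and Σ_{i=1}^n φ_i = 0, the number of indices i for which the face F(φ_i) contains at least two points is at most n − 2, and the linear span of the union of those faces F(φ_i) that are singletons is all of X (has dimension 2). -/

import Mathlib

/-- The Fermat–Torricelli set of the points `x 0, …, x (n-1)`: the set of points minimizing
the sum of distances to the `x i`. -/
def ft {X : Type*} [NormedAddCommGroup X] {n : ℕ} (x : Fin n → X) : Set X :=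
  {p | ∀ q : X, ∑ i, ‖p - x i‖ ≤ ∑ i, ‖q - x i‖}

/-- The face of the unit circle determined by a norm-one functional `φ`. -/
def face {X : Type*} [NormedAddCommGroup X] [NormedSpace ℝ X] (φ : X →L[ℝ] ℝ) : Set X :=
  {u | ‖u‖ = 1 ∧ φ u = 1}

/-!
Write `f y = ∑ i, ‖y - x i‖`. If functionals `φ i` of norm at most one with `∑ i, φ i = 0`
satisfy `φ i (p - x i) = ‖p - x i‖`, then `p` minimizes `f`. Conversely, at a minimizer `m` and
for any direction `e`, functionals norming `m - x i + t • e` have a cluster point as `t → 0⁺`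
that norms every `m - x i` and is nonnegative on `e`; a convex combination of those for `e` and
`-e` vanishes on `e`.

If `p ≠ q` both minimize `f`, so does their midpoint `m`, with equality in every triangle
inequality `‖(p - x i) + (q - x i)‖ ≤ ‖p - x i‖ + ‖q - x i‖`. So a functional norming `m - x i`
also norms `p - x i` and `q - x i`, and the sum of such a family vanishes on `q - p` for free;
in the plane one further direction suffices to make it a consistent family. All its point-faces
are then parallel to `q - p`, so they do not span. Conversely, more than `n - 2` flattenings, or
collinear point-faces, give `d ≠ 0` in the span of every face of a consistent family; each `φ i`
then norms some `v i` and `v i + d`, and for `x = -v` both `0` and `d` minimize `f`.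
-/

open Module Filter Topology Submodule

section LinearAlgebra

variable {K V : Type*} [Field K] [AddCommGroup V] [Module K V]

theorem mem_span_singleton_of_mem_span_singleton {u d : V} (hu : u ≠ 0) (h : u ∈ K ∙ d) :
    d ∈ K ∙ u := by
  obtain ⟨c, rfl⟩ := mem_span_singleton.1 h
  have hc : c ≠ 0 := by rintro rfl; exact hu (zero_smul K d)
  exact mem_span_singleton.2 ⟨c⁻¹, inv_smul_smul₀ hc d⟩

theorem span_singleton_ne_top (h : 1 < finrank K V) (v : V) : (K ∙ v) ≠ ⊤ := by
  intro htop
  have := finrank_span_le_card (R := K) ({v} : Set V)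
  rw [htop, finrank_top] at this
  simp at this
  omega

theorem span_ne_top_of_subsingleton (h : 1 < finrank K V) {s : Set V} (hs : s.Subsingleton) :
    span K s ≠ ⊤ := by
  obtain ⟨v, hv⟩ : ∃ v, s ⊆ {v} := by
    rcases hs.eq_empty_or_singleton with rfl | ⟨v, rfl⟩
    exacts [⟨0, Set.empty_subset _⟩, ⟨v, subset_rfl⟩]
  exact ne_top_of_le_ne_top (span_singleton_ne_top h v) (span_mono hv)

theorem exists_ne_zero_le_span_singleton (hd : finrank K V = 2) {S : Submodule K V}
    (hS : S ≠ ⊤) : ∃ d ≠ (0 : V), S ≤ K ∙ d := by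
  have : FiniteDimensional K V := .of_finrank_eq_succ hd
  have : Nontrivial V := nontrivial_of_finrank_eq_succ hd
  rcases eq_or_ne S ⊥ with rfl | hS0
  · obtain ⟨d, hd0⟩ := exists_ne (0 : V)
    exact ⟨d, hd0, bot_le⟩
  · obtain ⟨d, hdS, hd0⟩ := exists_mem_ne_zero_of_ne_bot hS0
    refine ⟨d, hd0, (eq_of_le_of_finrank_le ((span_singleton_le_iff_mem _ _).2 hdS) ?_).ge⟩
    have := Submodule.finrank_lt hS
    rw [finrank_span_singleton hd0]
    omega

theorem span_pair_eq_top (hd : finrank K V = 2) {v e : V} (hv : v ≠ 0) (he : e ∉ K ∙ v) :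
    span K (Set.range ![v, e]) = ⊤ := by
  refine LinearIndependent.span_eq_top_of_card_eq_finrank ?_ (by simp [hd])
  exact (LinearIndependent.pair_iff' hv).2 fun a hae =>
    he (hae ▸ smul_mem _ a (mem_span_singleton_self v))

end LinearAlgebra

section NormingFunctional

variable {X : Type*} [NormedAddCommGroup X] [NormedSpace ℝ X] {φ : X →L[ℝ] ℝ}

theorem apply_le_norm_of_norm_le_one (hφ : ‖φ‖ ≤ 1) (v : X) : φ v ≤ ‖v‖ :=
  (le_abs_self _).trans ((φ.le_of_opNorm_le hφ v).trans_eq (one_mul _))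

theorem norm_eq_one_of_apply_eq_norm (hφ : ‖φ‖ ≤ 1) {v : X} (hv : v ≠ 0) (h : φ v = ‖v‖) :
    ‖φ‖ = 1 := by
  refine le_antisymm hφ (le_of_mul_le_mul_right ?_ (norm_pos_iff.2 hv))
  calc 1 * ‖v‖ = ‖φ v‖ := by rw [h, one_mul, norm_norm]
    _ ≤ ‖φ‖ * ‖v‖ := φ.le_opNorm v

theorem apply_add_eq_norm_add (hφ : ‖φ‖ ≤ 1) {v w : X} (hv : φ v = ‖v‖) (hw : φ w = ‖w‖) :
    φ (v + w) = ‖v + w‖ :=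
  le_antisymm (apply_le_norm_of_norm_le_one hφ _)
    (by rw [map_add, hv, hw]; exact norm_add_le v w)

theorem apply_smul_eq_norm_smul {v : X} (hv : φ v = ‖v‖) {c : ℝ} (hc : 0 ≤ c) :
    φ (c • v) = ‖c • v‖ := by
  rw [map_smul, hv, norm_smul, Real.norm_of_nonneg hc, smul_eq_mul]

theorem apply_eq_norm_of_apply_add_eq (hφ : ‖φ‖ ≤ 1) {a b : X} (h : φ (a + b) = ‖a‖ + ‖b‖) :
    φ a = ‖a‖ ∧ φ b = ‖b‖ := by
  have ha := apply_le_norm_of_norm_le_one hφ a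
  have hb := apply_le_norm_of_norm_le_one hφ b
  rw [map_add] at h
  constructor <;> linarith

/-- `{v | φ v = ‖v‖}` is a convex cone, so its span consists of differences of its elements. -/
theorem exists_apply_eq_norm_of_mem_span (hφ : ‖φ‖ ≤ 1) {d : X}
    (hd : d ∈ span ℝ {v | φ v = ‖v‖}) : ∃ v, φ v = ‖v‖ ∧ φ (v + d) = ‖v + d‖ := by
  induction hd using span_induction with
  | mem w hw => exact ⟨0, by simp, by simpa using hw⟩
  | zero => exact ⟨0, by simp, by simp⟩
  | add a b _ _ ha hb =>
    obtain ⟨v, hv, hva⟩ := ha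
    obtain ⟨w, hw, hwb⟩ := hb
    refine ⟨v + w, apply_add_eq_norm_add hφ hv hw, ?_⟩
    rw [show v + w + (a + b) = (v + a) + (w + b) by abel]
    exact apply_add_eq_norm_add hφ hva hwb
  | smul c a _ ha =>
    obtain ⟨v, hv, hva⟩ := ha
    rcases le_or_gt 0 c with hc | hc
    · refine ⟨c • v, apply_smul_eq_norm_smul hv hc, ?_⟩
      rw [← smul_add]
      exact apply_smul_eq_norm_smul hva hc
    · refine ⟨(-c) • (v + a), apply_smul_eq_norm_smul hva (by linarith), ?_⟩
      rw [show (-c) • (v + a) + c • a = (-c) • v by module]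
      exact apply_smul_eq_norm_smul hv (by linarith)

end NormingFunctional

section FermatTorricelli

variable {X : Type*} [NormedAddCommGroup X] {n : ℕ}

theorem ft_nonempty [ProperSpace X] (x : Fin n → X) : (ft x).Nonempty := by
  have hfar : ∀ᶠ p in cocompact X, ∀ i, 2 * ‖x i‖ ≤ ‖p‖ :=
    eventually_all.2 fun i => tendsto_norm_cocompact_atTop.eventually_ge_atTop _
  refine Continuous.exists_forall_le' (by fun_prop) 0 (hfar.mono fun p hp => ?_)
  refine Finset.sum_le_sum fun i _ => ?_
  rw [zero_sub, norm_neg]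
  linarith [norm_sub_norm_le p (x i), hp i]

variable [NormedSpace ℝ X] {x : Fin n → X}

theorem mem_ft_of_sum_eq_zero {p : X} (φ : Fin n → X →L[ℝ] ℝ) (hφ : ∀ i, ‖φ i‖ ≤ 1)
    (hsum : ∑ i, φ i = 0) (hp : ∀ i, φ i (p - x i) = ‖p - x i‖) : p ∈ ft x := by
  intro q
  have hshift : ∑ i, φ i (q - x i) = ∑ i, φ i (p - x i) + (∑ i, φ i) (q - p) := by
    rw [sum_apply, ← Finset.sum_add_distrib]
    exact Finset.sum_congr rfl fun i _ => by rw [← map_add, sub_add_sub_cancel']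
  calc ∑ i, ‖p - x i‖ = ∑ i, φ i (q - x i) := by
        rw [hshift, hsum, zero_apply, add_zero]
        exact Finset.sum_congr rfl fun i _ => (hp i).symm
    _ ≤ ∑ i, ‖q - x i‖ := Finset.sum_le_sum fun i _ => apply_le_norm_of_norm_le_one (hφ i) _

theorem exists_zero_mem_ft_and_mem_ft (φ : Fin n → X →L[ℝ] ℝ) (hφ : ∀ i, ‖φ i‖ ≤ 1)
    (hsum : ∑ i, φ i = 0) {d : X} (hd : ∀ i, d ∈ span ℝ {v | φ i v = ‖v‖}) :
    ∃ x : Fin n → X, 0 ∈ ft x ∧ d ∈ ft x := by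
  choose v hv hvd using fun i => exists_apply_eq_norm_of_mem_span (hφ i) (hd i)
  refine ⟨-v, mem_ft_of_sum_eq_zero φ hφ hsum fun i => ?_,
    mem_ft_of_sum_eq_zero φ hφ hsum fun i => ?_⟩
  · simpa using hv i
  · simpa [add_comm] using hvd i

theorem ft_midpoint {p q : X} (hp : p ∈ ft x) (hq : q ∈ ft x) :
    (2 : ℝ)⁻¹ • (p + q) ∈ ft x ∧ ∀ i, ‖(p - x i) + (q - x i)‖ = ‖p - x i‖ + ‖q - x i‖ := by
  set m := (2 : ℝ)⁻¹ • (p + q)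
  have hm : ∀ i, ‖(p - x i) + (q - x i)‖ = 2 * ‖m - x i‖ := fun i => by
    rw [show (p - x i) + (q - x i) = (2 : ℝ) • (m - x i) by module, norm_smul, Real.norm_two]
  have htri : ∀ i ∈ Finset.univ, ‖(p - x i) + (q - x i)‖ ≤ ‖p - x i‖ + ‖q - x i‖ :=
    fun i _ => norm_add_le _ _
  have hsum : ∑ i, (‖p - x i‖ + ‖q - x i‖) = 2 * ∑ i, ‖p - x i‖ := by
    rw [Finset.sum_add_distrib, le_antisymm (hq p) (hp q), two_mul]
  have hm_le : ∑ i, ‖m - x i‖ ≤ ∑ i, ‖p - x i‖ := by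
    have := Finset.sum_le_sum htri
    simp only [hm, ← Finset.mul_sum, hsum] at this
    linarith
  refine ⟨fun z => hm_le.trans (hp z),
    fun i => (Finset.sum_eq_sum_iff_of_le htri).1 ?_ i (Finset.mem_univ i)⟩
  refine le_antisymm (Finset.sum_le_sum htri) ?_
  simp only [hm, ← Finset.mul_sum, hsum]
  linarith [hp m]

theorem exists_almost_norming_sum_apply_nonneg {m : X} (hm : m ∈ ft x) (e : X) {t : ℝ}
    (ht : 0 < t) :
    ∃ ψ : Fin n → X →L[ℝ] ℝ, ‖ψ‖ ≤ 1 ∧ (∀ i, ‖m - x i‖ - 2 * t * ‖e‖ ≤ ψ i (m - x i)) ∧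
      0 ≤ ∑ i, ψ i e := by
  choose ψ hψ hψv using fun i => exists_dual_vector'' ℝ (m - x i + t • e)
  simp only [RCLike.ofReal_real_eq_id, id] at hψv
  have hsplit : ∀ i, ψ i (m - x i) + t * ψ i e = ‖m - x i + t • e‖ := fun i => by
    rw [← hψv i, map_add, map_smul, smul_eq_mul]
  refine ⟨ψ, (pi_norm_le_iff_of_nonneg zero_le_one).2 hψ, fun i => ?_, ?_⟩
  · have hte : ‖m - x i‖ ≤ ‖m - x i + t • e‖ + t * ‖e‖ := by
      simpa [norm_smul, abs_of_pos ht] using norm_sub_le (m - x i + t • e) (t • e)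
    have hψe := mul_le_mul_of_nonneg_left (apply_le_norm_of_norm_le_one (hψ i) e) ht.le
    linarith [hsplit i]
  · refine nonneg_of_mul_nonneg_right ?_ ht
    calc 0 ≤ ∑ i, ‖m - x i + t • e‖ - ∑ i, ‖m - x i‖ := by
          simpa [sub_nonneg, add_sub_right_comm] using hm (m + t • e)
      _ ≤ ∑ i, (ψ i (m - x i) + t * ψ i e) - ∑ i, ψ i (m - x i) := by
          simp only [hsplit]
          exact sub_le_sub_left
            (Finset.sum_le_sum fun i _ => apply_le_norm_of_norm_le_one (hψ i) _) _
      _ = t * ∑ i, ψ i e := by rw [Finset.sum_add_distrib, Finset.mul_sum]; ring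

theorem exists_norming_sum_apply_nonneg [FiniteDimensional ℝ X] {m : X} (hm : m ∈ ft x) (e : X) :
    ∃ Ψ : Fin n → X →L[ℝ] ℝ, (∀ i, ‖Ψ i‖ ≤ 1 ∧ Ψ i (m - x i) = ‖m - x i‖) ∧
      0 ≤ ∑ i, Ψ i e := by
  choose ψ hψ hψm hψe using fun k : ℕ =>
    exists_almost_norming_sum_apply_nonneg hm e (Nat.one_div_pos_of_nat (n := k))
  obtain ⟨Ψ, hΨ, σ, hσ, hlim⟩ := (isCompact_closedBall (0 : Fin n → X →L[ℝ] ℝ) 1).tendsto_subseq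
    fun k => mem_closedBall_zero_iff.2 (hψ k)
  have heval : ∀ i z, Tendsto (fun k => ψ (σ k) i z) atTop (𝓝 (Ψ i z)) := fun i z =>
    ((show Continuous fun Φ : Fin n → X →L[ℝ] ℝ => Φ i z by fun_prop).tendsto Ψ).comp hlim
  have ht : Tendsto (fun k => 1 / ((σ k : ℝ) + 1)) atTop (𝓝 0) :=
    tendsto_one_div_add_atTop_nhds_zero_nat.comp hσ.tendsto_atTop
  refine ⟨Ψ, fun i => ?_,
    ge_of_tendsto' (tendsto_finsetSum _ fun i _ => heval i e) fun k => hψe (σ k)⟩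
  have hΨi : ‖Ψ i‖ ≤ 1 := (norm_le_pi_norm Ψ i).trans (mem_closedBall_zero_iff.1 hΨ)
  refine ⟨hΨi, le_antisymm (apply_le_norm_of_norm_le_one hΨi _)
    (le_of_tendsto_of_tendsto' ?_ (heval i _) fun k => hψm (σ k) i)⟩
  simpa using tendsto_const_nhds.sub ((ht.const_mul 2).mul_const ‖e‖)

theorem exists_norming_sum_apply_eq_zero [FiniteDimensional ℝ X] {m : X} (hm : m ∈ ft x) (e : X) :
    ∃ Θ : Fin n → X →L[ℝ] ℝ, (∀ i, ‖Θ i‖ ≤ 1 ∧ Θ i (m - x i) = ‖m - x i‖) ∧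
      ∑ i, Θ i e = 0 := by
  obtain ⟨Ψ, hΨ, hΨe⟩ := exists_norming_sum_apply_nonneg hm e
  obtain ⟨Φ, hΦ, hΦe⟩ := exists_norming_sum_apply_nonneg hm (-e)
  simp only [map_neg, Finset.sum_neg_distrib, neg_nonneg] at hΦe
  obtain ⟨t, ⟨ht0, ht1⟩, hte⟩ := intermediate_value_Icc zero_le_one
    (f := fun t : ℝ => (1 - t) * ∑ i, Φ i e + t * ∑ i, Ψ i e) (by fun_prop)
    ⟨by simpa using hΦe, by simpa using hΨe⟩
  refine ⟨fun i => (1 - t) • Φ i + t • Ψ i, fun i => ⟨?_, ?_⟩, ?_⟩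
  · exact mem_closedBall_zero_iff.1 <| convex_closedBall (0 : X →L[ℝ] ℝ) 1
      (mem_closedBall_zero_iff.2 (hΦ i).1) (mem_closedBall_zero_iff.2 (hΨ i).1)
      (sub_nonneg.2 ht1) ht0 (sub_add_cancel 1 t)
  · simp only [add_apply, smul_apply, (hΦ i).2, smul_eq_mul, (hΨ i).2]
    ring
  · simpa [Finset.sum_add_distrib, Finset.mul_sum] using hte

end FermatTorricelli

section Faces

variable {X : Type*} [NormedAddCommGroup X] [NormedSpace ℝ X] {φ : X →L[ℝ] ℝ}

theorem apply_eq_norm_of_mem_face {u : X} (hu : u ∈ face φ) : φ u = ‖u‖ :=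
  hu.2.trans hu.1.symm

theorem ne_zero_of_mem_face {u : X} (hu : u ∈ face φ) : u ≠ 0 := by
  rintro rfl
  simpa using hu.1

theorem face_nonempty [FiniteDimensional ℝ X] [Nontrivial X] (hφ : ‖φ‖ = 1) :
    (face φ).Nonempty := by
  have hcpt : IsCompact ((fun u => ‖φ u‖) '' Metric.sphere (0 : X) 1) :=
    (isCompact_sphere 0 1).image (by fun_prop)
  obtain ⟨u, hu, hφu⟩ := hcpt.sSup_mem ((NormedSpace.sphere_nonempty.2 zero_le_one).image _)
  rw [φ.sSup_sphere_eq_norm, hφ] at hφu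
  rw [mem_sphere_zero_iff_norm] at hu
  rcases (abs_eq zero_le_one).1 (show |φ u| = 1 from hφu) with h | h
  · exact ⟨u, hu, h⟩
  · exact ⟨-u, by rwa [norm_neg], by rw [map_neg, h, neg_neg]⟩

theorem eq_norm_smul_of_face_eq_singleton {u a : X} (hface : face φ = {u})
    (ha : φ a = ‖a‖) : a = ‖a‖ • u := by
  rcases eq_or_ne a 0 with rfl | ha0
  · simp
  have hna : ‖a‖ ≠ 0 := norm_ne_zero_iff.2 ha0
  have hmem : ‖a‖⁻¹ • a ∈ face φ :=
    ⟨by rw [norm_smul, norm_inv, norm_norm, inv_mul_cancel₀ hna],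
      by rw [map_smul, ha, smul_eq_mul, inv_mul_cancel₀ hna]⟩
  rw [hface, Set.mem_singleton_iff] at hmem
  rw [← hmem, smul_inv_smul₀ hna]

theorem mem_span_sub_of_face_eq_singleton {u a b : X} (hface : face φ = {u})
    (ha : φ a = ‖a‖) (hb : φ b = ‖b‖) (hab : a ≠ b) : u ∈ ℝ ∙ (b - a) := by
  refine mem_span_singleton_of_mem_span_singleton (sub_ne_zero.2 hab.symm)
    (mem_span_singleton.2 ⟨‖b‖ - ‖a‖, ?_⟩)
  rw [sub_smul, ← eq_norm_smul_of_face_eq_singleton hface ha,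
    ← eq_norm_smul_of_face_eq_singleton hface hb]

theorem span_face_eq_top (hd : finrank ℝ X = 2) {u v : X} (hu : u ∈ face φ)
    (hv : v ∈ face φ) (huv : u ≠ v) : span ℝ (face φ) = ⊤ := by
  have hvu : v ∉ ℝ ∙ u := by
    intro h
    obtain ⟨c, rfl⟩ := mem_span_singleton.1 h
    have hc : c = 1 := by simpa [hu.2] using hv.2
    exact huv (by rw [hc, one_smul])
  refine eq_top_iff.2 ((span_pair_eq_top hd (ne_zero_of_mem_face hu) hvu).ge.trans (span_mono ?_))
  rintro _ ⟨j, rfl⟩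
  fin_cases j
  exacts [hu, hv]

theorem mem_span_face (hd : finrank ℝ X = 2) (hφ : ‖φ‖ = 1) {d : X}
    (hpt : ∀ u, face φ = {u} → u ∈ ℝ ∙ d) : d ∈ span ℝ (face φ) := by
  have : FiniteDimensional ℝ X := .of_finrank_eq_succ hd
  have : Nontrivial X := nontrivial_of_finrank_eq_succ hd
  obtain ⟨u, hu⟩ := face_nonempty hφ
  rcases Set.eq_singleton_or_nontrivial hu with hface | ⟨v, hv, w, hw, hvw⟩
  · rw [hface]
    exact mem_span_singleton_of_mem_span_singleton (ne_zero_of_mem_face hu) (hpt u hface)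
  · rw [span_face_eq_top hd hv hw hvw]
    exact mem_top

end Faces

section Plane

variable {X : Type*} [NormedAddCommGroup X] [NormedSpace ℝ X] {n : ℕ}

theorem span_pointFaces_ne_top (hd : finrank ℝ X = 2) {φ : Fin n → X →L[ℝ] ℝ}
    (h : ¬ ({i : Fin n | ∃ u v : X, u ≠ v ∧ u ∈ face (φ i) ∧ v ∈ face (φ i)}.ncard ≤ n - 2 ∧
          span ℝ (⋃ i ∈ {i : Fin n | ∃ u : X, face (φ i) = {u}}, face (φ i)) = ⊤)) :
    span ℝ (⋃ i ∈ {i : Fin n | ∃ u : X, face (φ i) = {u}}, face (φ i)) ≠ ⊤ := by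
  set flat := {i : Fin n | ∃ u v : X, u ≠ v ∧ u ∈ face (φ i) ∧ v ∈ face (φ i)}
  set point := {i : Fin n | ∃ u : X, face (φ i) = {u}}
  rcases not_and_or.1 h with hmany | hspan
  · have hdisj : Disjoint flat point := Set.disjoint_left.2 fun i ⟨a, b, hab, ha, hb⟩ ⟨u, hu⟩ =>
      hab (by rw [hu] at ha hb; exact ha.trans hb.symm)
    have hcard : flat.ncard + point.ncard ≤ n := by
      rw [← Set.ncard_union_eq hdisj]
      simpa using Set.ncard_le_ncard (Set.subset_univ (flat ∪ point))
    have hpoint : point.Subsingleton := Set.ncard_le_one_iff_subsingleton.1 (by omega)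
    refine span_ne_top_of_subsingleton (by omega) fun a ha b hb => ?_
    simp only [Set.mem_iUnion] at ha hb
    obtain ⟨i, ⟨u, hu⟩, ha⟩ := ha
    obtain ⟨j, hj, hb⟩ := hb
    obtain rfl := hpoint ⟨u, hu⟩ hj
    rw [hu] at ha hb
    exact ha.trans hb.symm
  · exact hspan

theorem exists_consistent_norming_of_mem_ft (hd : finrank ℝ X = 2) {x : Fin n → X} {p q : X}
    (hp : p ∈ ft x) (hq : q ∈ ft x) (hpq : p ≠ q) :
    ∃ φ : Fin n → X →L[ℝ] ℝ, (∀ i, ‖φ i‖ = 1) ∧ ∑ i, φ i = 0 ∧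
      ∀ i, φ i (p - x i) = ‖p - x i‖ ∧ φ i (q - x i) = ‖q - x i‖ := by
  have : FiniteDimensional ℝ X := .of_finrank_eq_succ hd
  obtain ⟨hm, hadd⟩ := ft_midpoint hp hq
  obtain ⟨e, -, he⟩ := SetLike.exists_of_lt
    (lt_top_iff_ne_top.2 (span_singleton_ne_top (K := ℝ) (by omega) (q - p)))
  obtain ⟨φ, hφ, hφe⟩ := exists_norming_sum_apply_eq_zero hm e
  have hnorming : ∀ i, φ i (p - x i) = ‖p - x i‖ ∧ φ i (q - x i) = ‖q - x i‖ := fun i => by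
    refine apply_eq_norm_of_apply_add_eq (hφ i).1 ?_
    rw [← hadd i, show p - x i + (q - x i) = (2 : ℝ) • ((2 : ℝ)⁻¹ • (p + q) - x i) by module]
    exact apply_smul_eq_norm_smul (hφ i).2 zero_le_two
  have hφd : ∑ i, φ i (q - p) = 0 := by
    calc ∑ i, φ i (q - p) = ∑ i, ‖q - x i‖ - ∑ i, ‖p - x i‖ := by
          rw [← Finset.sum_sub_distrib]
          refine Finset.sum_congr rfl fun i _ => ?_
          rw [← sub_sub_sub_cancel_right q p (x i), map_sub, (hnorming i).1, (hnorming i).2]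
      _ = 0 := sub_eq_zero.2 (le_antisymm (hq p) (hp q))
  have hsum : ∑ i, φ i = 0 := by
    refine ContinuousLinearMap.coe_injective
      (LinearMap.ext_on_range (span_pair_eq_top hd (sub_ne_zero.2 hpq.symm) he) fun j => ?_)
    fin_cases j
    exacts [by simpa using hφd, by simpa using hφe]
  refine ⟨φ, fun i => ?_, hsum, hnorming⟩
  rcases eq_or_ne (p - x i) 0 with hp0 | hp0
  · refine norm_eq_one_of_apply_eq_norm (hφ i).1 (fun hq0 => hpq ?_) (hnorming i).2
    rw [sub_eq_zero] at hp0 hq0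
    rw [hp0, hq0]
  · exact norm_eq_one_of_apply_eq_norm (hφ i).1 hp0 (hnorming i).1

end Plane

theorem ft_unique_odd_plane_iff_general
    {X : Type*} [NormedAddCommGroup X] [NormedSpace ℝ X]
    (hd : Module.finrank ℝ X = 2)
    {n : ℕ} :
    (∀ x : Fin n → X, ∃ p : X, ft x = {p}) ↔
      (∀ φ : Fin n → (X →L[ℝ] ℝ), (∀ i, ‖φ i‖ = 1) → ∑ i, φ i = 0 →
        ({i : Fin n | ∃ u v : X, u ≠ v ∧ u ∈ face (φ i) ∧ v ∈ face (φ i)}.ncard ≤ n - 2 ∧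
          Submodule.span ℝ
            (⋃ i ∈ {i : Fin n | ∃ u : X, face (φ i) = {u}}, face (φ i)) = ⊤)) := by
  have : FiniteDimensional ℝ X := .of_finrank_eq_succ hd
  constructor
  · intro hunique φ hφ hsum
    by_contra hcrit
    obtain ⟨d, hd0, hpoint⟩ := exists_ne_zero_le_span_singleton hd (span_pointFaces_ne_top hd hcrit)
    have hd_mem : ∀ i, d ∈ span ℝ {v | φ i v = ‖v‖} := fun i =>
      span_mono (fun v hv => apply_eq_norm_of_mem_face hv) <| mem_span_face hd (hφ i)
        fun u hu => hpoint (subset_span (Set.mem_biUnion ⟨u, hu⟩ (by simp [hu])))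
    obtain ⟨x, h0, hdx⟩ := exists_zero_mem_ft_and_mem_ft φ (fun i => (hφ i).le) hsum hd_mem
    obtain ⟨p, hp⟩ := hunique x
    rw [hp] at h0 hdx
    exact hd0 (hdx.trans h0.symm)
  · intro hcrit x
    obtain ⟨p, hp⟩ := ft_nonempty x
    refine ⟨p, Set.eq_singleton_iff_unique_mem.2 ⟨hp, fun q hq => by_contra fun hqp => ?_⟩⟩
    obtain ⟨φ, hφ, hsum, hnorming⟩ := exists_consistent_norming_of_mem_ft hd hp hq (Ne.symm hqp)
    refine span_singleton_ne_top (K := ℝ) (by omega) (q - p) (eq_top_iff.2 ?_)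
    rw [← (hcrit φ hφ hsum).2, span_le, Set.iUnion₂_subset_iff]
    rintro i ⟨u, hu⟩
    rw [hu, Set.singleton_subset_iff, ← sub_sub_sub_cancel_right q p (x i)]
    exact mem_span_sub_of_face_eq_singleton hu (hnorming i).1 (hnorming i).2
      (by simpa using Ne.symm hqp)

/-- Uniqueness criterion on a Minkowski plane for an odd number of points: the
Fermat–Torricelli set is a single point for every choice of `n` points iff every
consistent set of `n` faces of the unit circle contains at most `n - 2` flattenings and
the point-faces in it together span the whole plane. -/
theorem ft_unique_odd_plane_iff
    {X : Type*} [NormedAddCommGroup X] [NormedSpace ℝ X]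
    (hd : Module.finrank ℝ X = 2)
    {n : ℕ} (hn : 3 ≤ n) (hodd : Odd n) :
    (∀ x : Fin n → X, ∃ p : X, ft x = {p}) ↔
      (∀ φ : Fin n → (X →L[ℝ] ℝ), (∀ i, ‖φ i‖ = 1) → ∑ i, φ i = 0 →
        ({i : Fin n | ∃ u v : X, u ≠ v ∧ u ∈ face (φ i) ∧ v ∈ face (φ i)}.ncard ≤ n - 2 ∧
          Submodule.span ℝ
            (⋃ i ∈ {i : Fin n | ∃ u : X, face (φ i) = {u}}, face (φ i)) = ⊤)) :=
  ft_unique_odd_plane_iff_general hd
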